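/- For n ≥ 2, every independent set A of vertices in the Kneser graph KG(n,2) is either starlike (there exists a symbol a ∈ {1,…,n} contained in every 2-subset belonging to A) or equals {{a,b},{a,c},{b,c}} for some three distinct symbols a,b,c ∈ {1,…,n}. -/

import Mathlib

/-- The vertex type of the Kneser graph `KG(n,2)`: 2-element subsets of `{0,…,n-1}`. -/
abbrev KVert (n : ℕ) := {s : Finset (Fin n) // s.card = 2}

/-- The Kneser graph `KG(n,2)`: vertices are 2-subsets, adjacent iff disjoint. -/
def KG2 (n : ℕ) : SimpleGraph (KVert n) where
  Adj u v := Disjoint u.1 v.1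
  symm := ⟨fun u v h => h.symm⟩
  loopless := ⟨fun u h => by
    have h2 := u.2
    have h' : Disjoint u.1 u.1 := h
    rw [disjoint_self] at h'
    simp [h'] at h2⟩

/-- A proper coloring of `G` with `k` (nonempty) color classes: a partition of the
vertex set into `k` nonempty independent sets. -/
def IsProperColoring {V : Type*} (G : SimpleGraph V) {k : ℕ} (C : Fin k → Set V) : Prop :=
  (∀ v, ∃! i, v ∈ C i) ∧ (∀ i, (C i).Nonempty) ∧
    ∀ i, ∀ u ∈ C i, ∀ w ∈ C i, ¬ G.Adj u w

/-- A total dominator coloring: a proper coloring such that every vertex is adjacent to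
all vertices of some (nonempty) color class. -/
def IsTDColoring {V : Type*} (G : SimpleGraph V) {k : ℕ} (C : Fin k → Set V) : Prop :=
  IsProperColoring G C ∧ ∀ v, ∃ i, (C i).Nonempty ∧ ∀ u ∈ C i, G.Adj v u

/-- The chromatic number: minimum number of color classes in a proper coloring. -/
noncomputable def chromNum {V : Type*} (G : SimpleGraph V) : ℕ :=
  sInf {k | ∃ C : Fin k → Set V, IsProperColoring G C}

/-- The total dominator chromatic number: minimum number of color classes in a TDC. -/
noncomputable def tdChromNum {V : Type*} (G : SimpleGraph V) : ℕ :=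
  sInf {k | ∃ C : Fin k → Set V, IsTDColoring G C}

/-- A total dominating set: every vertex has a neighbor in `S`. -/
def IsTotalDomSet {V : Type*} (G : SimpleGraph V) (S : Set V) : Prop :=
  ∀ v, ∃ u ∈ S, G.Adj v u

/-- The total domination number: minimum size of a total dominating set. -/
noncomputable def totalDomNum {V : Type*} [Fintype V] (G : SimpleGraph V) : ℕ :=
  sInf {k | ∃ S : Finset V, IsTotalDomSet G ↑S ∧ S.card = k}

/-- A set of vertices of `KG(n,2)` is starlike if all its 2-subsets share a common symbol. -/
def Starlike {n : ℕ} (A : Set (KVert n)) : Prop :=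
  ∃ a : Fin n, ∀ v ∈ A, a ∈ v.1

/-- A set of vertices of `KG(n,2)` is triangular if it equals `{{a,b},{a,c},{b,c}}`
for three distinct symbols `a, b, c`. -/
def Triangular {n : ℕ} (A : Set (KVert n)) : Prop :=
  ∃ a b c : Fin n, a ≠ b ∧ a ≠ c ∧ b ≠ c ∧
    A = {v : KVert n | v.1 = {a, b} ∨ v.1 = {a, c} ∨ v.1 = {b, c}}

/-!
An intersecting family of 2-sets with no common element is a triangle. Take `{a, b}` in the
family; some member avoids `a`, so it meets `{a, b}` in `b` and is `{b, c}`; some member avoids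
`b`, so it meets `{a, b}` in `a` and `{b, c}` in `c` and is `{a, c}`. Every member then meets all
three sides of the triangle `a b c`, and a 2-set doing so is one of the sides.
-/

open Finset

namespace Finset

variable {α : Type*} [DecidableEq α] {s : Finset α} {a b c : α}

lemma mem_of_not_disjoint_pair (h : ¬Disjoint s {a, b}) (ha : a ∉ s) : b ∈ s := by
  obtain ⟨x, hxs, hx⟩ := not_disjoint_iff.mp h
  rcases mem_insert.mp hx with rfl | hx
  · exact absurd hxs ha
  · rwa [mem_singleton.mp hx] at hxs

lemma eq_pair_of_card_eq_two (hs : #s = 2) (hab : a ≠ b) (ha : a ∈ s) (hb : b ∈ s) :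
    s = {a, b} :=
  (eq_of_subset_of_card_le (insert_subset ha (singleton_subset_iff.mpr hb))
    (by rw [hs, card_pair hab])).symm

lemma exists_ne_eq_pair_of_card_eq_two (hs : #s = 2) (ha : a ∈ s) : ∃ b, b ≠ a ∧ s = {a, b} := by
  obtain ⟨b, hbs, hba⟩ := exists_mem_ne (by omega : 1 < #s) a
  exact ⟨b, hba, eq_pair_of_card_eq_two hs hba.symm ha hbs⟩

lemma eq_side_of_not_disjoint_sides (hs : #s = 2) (hab : a ≠ b) (hac : a ≠ c) (hbc : b ≠ c)
    (h_ab : ¬Disjoint s {a, b}) (h_ac : ¬Disjoint s {a, c}) (h_bc : ¬Disjoint s {b, c}) :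
    s = {a, b} ∨ s = {a, c} ∨ s = {b, c} := by
  by_cases ha : a ∈ s
  · obtain ⟨x, hxs, hx⟩ := not_disjoint_iff.mp h_bc
    have hxa : a ≠ x := by rintro rfl; simp [hab, hac] at hx
    rw [eq_pair_of_card_eq_two hs hxa ha hxs]
    rcases mem_insert.mp hx with rfl | hx
    · exact Or.inl rfl
    · exact Or.inr (Or.inl (by rw [mem_singleton.mp hx]))
  · exact Or.inr (Or.inr (eq_pair_of_card_eq_two hs hbc (mem_of_not_disjoint_pair h_ab ha)
      (mem_of_not_disjoint_pair h_ac ha)))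

end Finset

theorem Set.Intersecting.eq_triangle_of_forall_card_eq_two {α : Type*} [DecidableEq α]
    [Nonempty α] {𝒜 : Set (Finset α)} (h𝒜 : 𝒜.Intersecting) (hcard : ∀ s ∈ 𝒜, #s = 2)
    (hnot_star : ∀ a, ∃ s ∈ 𝒜, a ∉ s) :
    ∃ a b c, a ≠ b ∧ a ≠ c ∧ b ≠ c ∧ 𝒜 = {{a, b}, {a, c}, {b, c}} := by
  obtain ⟨u, hu, -⟩ := hnot_star (Classical.arbitrary α)
  obtain ⟨a, b, hab, rfl⟩ := card_eq_two.mp (hcard u hu)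
  obtain ⟨v, hv, hav⟩ := hnot_star a
  obtain ⟨c, hcb, rfl⟩ :=
    exists_ne_eq_pair_of_card_eq_two (hcard v hv) (mem_of_not_disjoint_pair (h𝒜 hv hu) hav)
  have hac : a ≠ c := by rintro rfl; simp at hav
  obtain ⟨w, hw, hbw⟩ := hnot_star b
  have haw : a ∈ w := mem_of_not_disjoint_pair (by rw [Finset.pair_comm]; exact h𝒜 hw hu) hbw
  have hcw : c ∈ w := mem_of_not_disjoint_pair (h𝒜 hw hv) hbw
  obtain rfl := eq_pair_of_card_eq_two (hcard w hw) hac haw hcw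
  refine ⟨a, b, c, hab, hac, hcb.symm, Set.ext fun t => ⟨fun ht => ?_, ?_⟩⟩
  · exact eq_side_of_not_disjoint_sides (hcard t ht) hab hac hcb.symm (h𝒜 ht hu) (h𝒜 ht hw)
      (h𝒜 ht hv)
  · rintro (rfl | rfl | rfl) <;> assumption

/-- For `n ≥ 2`, every independent set of vertices of `KG(n,2)` is
either starlike or equals `{{a,b},{a,c},{b,c}}` for three distinct symbols `a,b,c`. -/
theorem stmt13 (n : ℕ) (hn : 2 ≤ n) (A : Set (KVert n))
    (hA : ∀ u ∈ A, ∀ v ∈ A, ¬ (KG2 n).Adj u v) :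
    Starlike A ∨ Triangular A := by
  by_cases hstar : Starlike A
  · exact Or.inl hstar
  have : Nonempty (Fin n) := ⟨⟨0, by omega⟩⟩
  have hnot_star : ∀ a, ∃ s ∈ Subtype.val '' A, a ∉ s := by
    simpa [Starlike] using hstar
  have hintersecting : (Subtype.val '' A).Intersecting := by
    rintro _ ⟨u, hu, rfl⟩ _ ⟨v, hv, rfl⟩
    exact hA u hu v hv
  obtain ⟨a, b, c, hab, hac, hbc, himage⟩ := hintersecting.eq_triangle_of_forall_card_eq_two
    (by rintro _ ⟨u, -, rfl⟩; exact u.2) hnot_star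
  refine Or.inr ⟨a, b, c, hab, hac, hbc, Set.ext fun v => ?_⟩
  rw [← (Subtype.val_injective.mem_set_image (s := A)), himage]
  rfl
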